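/- Let a₁,…,aₙ (n ≥ 1) be positive integers such that the sequence is not of any of the following forms: (1); (1,1); (1,a,1) for some a ≥ 1; (1,1,1,1). Then T(n) ≥ V(a₁,…,aₙ), i.e. T(n) ≥ (∏_{i=1}^{n}(aᵢ+2))/2ⁿ. (Equivalently, det R(a₁,…,aₙ) ≥ V(a₁,…,aₙ) for every 2-bridge link other than R(1), R(1,1), R(1,a,1), R(1,1,1,1).) -/
import Mathlib

set_option maxHeartbeats 1000000


/-- The Kauffman–Lopes recurrence computing the determinant of the
2-bridge link `R(a₁, …, aₙ)`:  `T 0 = 1`, `T 1 = a 1`,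
`T (k+1) = a (k+1) * T k + T (k-1)`. -/
def Trec (a : ℕ → ℕ) : ℕ → ℕ
  | 0 => 1
  | 1 => a 1
  | (n + 2) => a (n + 2) * Trec a (n + 1) + Trec a n

/-- `V(a₁, …, aₙ) = ∏_{i=1}^n (aᵢ + 2)/2`. -/
noncomputable def Vprod (a : ℕ → ℕ) (n : ℕ) : ℝ :=
  ∏ i ∈ Finset.Icc 1 n, ((a i : ℝ) + 2) / 2

lemma Vprod_zero (a : ℕ → ℕ) : Vprod a 0 = 1 := by simp [Vprod]

lemma Vprod_succ (a : ℕ → ℕ) (n : ℕ) :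
    Vprod a (n+1) = Vprod a n * (((a (n+1) : ℝ) + 2) / 2) := by
  rw [Vprod, Vprod, Finset.prod_Icc_succ_top (Nat.le_add_left 1 n)]

lemma Vprod_pos (a : ℕ → ℕ) (n : ℕ) : 0 < Vprod a n := by
  refine Finset.prod_pos fun i _ => by positivity

def TVInv (a : ℕ → ℕ) (k : ℕ) : Prop :=
  Vprod a k ≤ (Trec a k : ℝ) ∧ 3/2 * Vprod a k ≤ (Trec a k : ℝ) + (Trec a (k-1) : ℝ)

lemma TVstep (a : ℕ → ℕ) (j : ℕ) (ha : 1 ≤ a (j+2)) (h : TVInv a (j+1)) : TVInv a (j+2) := by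
  obtain ⟨hP, hΦ⟩ := h
  simp only [Nat.add_sub_cancel] at hΦ ⊢
  have hm : (1:ℝ) ≤ (a (j+2) : ℝ) := by exact_mod_cast ha
  have hV : 0 < Vprod a (j+1) := Vprod_pos a (j+1)
  have ht : Trec a (j+2) = a (j+2) * Trec a (j+1) + Trec a j := rfl
  have hV2 : Vprod a (j+2) = Vprod a (j+1) * (((a (j+2) : ℝ) + 2) / 2) := Vprod_succ a (j+1)
  have ht0 : (0:ℝ) ≤ (Trec a j : ℝ) := by positivity
  constructor
  · rw [hV2, ht]
    push_cast
    nlinarith [mul_nonneg (sub_nonneg.2 hm) (sub_nonneg.2 hP)]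
  · rw [hV2, ht]
    push_cast
    nlinarith [mul_nonneg (sub_nonneg.2 hm) (sub_nonneg.2 hP)]

lemma TVprop (a : ℕ → ℕ) (k : ℕ) (hk : 1 ≤ k) (hI : TVInv a k) :
    ∀ n, k ≤ n → (∀ i, k < i → i ≤ n → 1 ≤ a i) → TVInv a n := by
  intro n hn
  induction n, hn using Nat.le_induction with
  | base => intro _; exact hI
  | succ n hn ih =>
    intro hpos
    have h1 := ih fun i h h' => hpos i h (h'.trans (Nat.le_succ n))
    obtain ⟨j, rfl⟩ : ∃ j, n = j + 1 := ⟨n-1, (Nat.succ_pred_eq_of_pos (hk.trans hn)).symm⟩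
    exact TVstep a j (hpos (j+2) (by omega) (by omega)) h1

lemma VprodE (a : ℕ → ℕ) :
    Vprod a 1 = ((a 1:ℝ)+2)/2 ∧
    Vprod a 2 = ((a 1:ℝ)+2)/2 * (((a 2:ℝ)+2)/2) ∧
    Vprod a 3 = ((a 1:ℝ)+2)/2 * (((a 2:ℝ)+2)/2) * (((a 3:ℝ)+2)/2) ∧
    Vprod a 4 = ((a 1:ℝ)+2)/2 * (((a 2:ℝ)+2)/2) * (((a 3:ℝ)+2)/2) * (((a 4:ℝ)+2)/2) ∧
    Vprod a 5 = ((a 1:ℝ)+2)/2 * (((a 2:ℝ)+2)/2) * (((a 3:ℝ)+2)/2) * (((a 4:ℝ)+2)/2) * (((a 5:ℝ)+2)/2) := by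
  have e1 : Vprod a 1 = _ := Vprod_succ a 0
  have e2 : Vprod a 2 = _ := Vprod_succ a 1
  have e3 : Vprod a 3 = _ := Vprod_succ a 2
  have e4 : Vprod a 4 = _ := Vprod_succ a 3
  have e5 : Vprod a 5 = _ := Vprod_succ a 4
  rw [Vprod_zero] at e1
  refine ⟨by rw [e1]; ring, by rw [e2, e1]; ring, by rw [e3, e2, e1]; ring,
    by rw [e4, e3, e2, e1]; ring, by rw [e5, e4, e3, e2, e1]; ring⟩

theorem det_ge_V (a : ℕ → ℕ) (n : ℕ) (hn : 1 ≤ n)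
    (hpos : ∀ i, 1 ≤ i → i ≤ n → 1 ≤ a i)
    (h1 : ¬(n = 1 ∧ a 1 = 1))
    (h2 : ¬(n = 2 ∧ a 1 = 1 ∧ a 2 = 1))
    (h3 : ¬(n = 3 ∧ a 1 = 1 ∧ a 3 = 1))
    (h4 : ¬(n = 4 ∧ a 1 = 1 ∧ a 2 = 1 ∧ a 3 = 1 ∧ a 4 = 1)) :
    Vprod a n ≤ (Trec a n : ℝ) := by
  obtain ⟨eV1, eV2, eV3, eV4, eV5⟩ := VprodE a
  have eT1 : Trec a 1 = a 1 := rfl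
  have eT0 : Trec a 0 = 1 := rfl
  have eT2 : Trec a 2 = a 2 * a 1 + 1 := rfl
  have eT3 : Trec a 3 = a 3 * (a 2 * a 1 + 1) + a 1 := rfl
  have eT4 : Trec a 4 = a 4 * Trec a 3 + Trec a 2 := rfl
  have eT5 : Trec a 5 = a 5 * Trec a 4 + Trec a 3 := rfl
  have ha1 : 1 ≤ a 1 := hpos 1 le_rfl hn
  rcases eq_or_lt_of_le ha1 with ha1e | ha1g
  swap
  · -- a 1 ≥ 2
    have h2a : (2:ℝ) ≤ (a 1 : ℝ) := by exact_mod_cast ha1g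
    have hI : TVInv a 1 := by
      constructor
      · rw [eV1, eT1]; linarith
      · show _ ≤ (Trec a 1 : ℝ) + (Trec a 0 : ℝ)
        rw [eV1, eT1, eT0]; push_cast; linarith
    exact (TVprop a 1 le_rfl hI n hn (fun i hi h' => hpos i (by omega) h')).1
  · -- a 1 = 1
    have ha1' : a 1 = 1 := ha1e.symm
    have hn2 : 2 ≤ n := by by_contra h; exact h1 ⟨by omega, ha1'⟩
    have ha2 : 1 ≤ a 2 := hpos 2 (by omega) hn2
    rcases eq_or_lt_of_le ha2 with ha2e | ha2g
    swap
    · -- a 2 ≥ 2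
      have h2a : (2:ℝ) ≤ (a 2 : ℝ) := by exact_mod_cast ha2g
      rcases eq_or_lt_of_le hn2 with hn2e | hn3'
      · -- n = 2
        subst hn2e
        rw [eV2, eT2, ha1']; push_cast; nlinarith
      · have hn3 : 3 ≤ n := hn3'
        have ha3 : 1 ≤ a 3 := hpos 3 (by omega) hn3
        rcases eq_or_lt_of_le ha3 with ha3e | ha3g
        swap
        · -- a 3 ≥ 2
          have h3a : (2:ℝ) ≤ (a 3 : ℝ) := by exact_mod_cast ha3g
          have hI : TVInv a 3 := by
            constructor
            · rw [eV3, eT3, ha1']; push_cast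
              nlinarith [mul_nonneg (sub_nonneg.2 h2a) (sub_nonneg.2 h3a)]
            · show _ ≤ (Trec a 3 : ℝ) + (Trec a 2 : ℝ)
              rw [eV3, eT3, eT2, ha1']; push_cast
              nlinarith [mul_nonneg (sub_nonneg.2 h2a) (sub_nonneg.2 h3a)]
          exact (TVprop a 3 (by norm_num) hI n hn3 fun i hi h' => hpos i (by omega) h').1
        · -- a 3 = 1
          have ha3' : a 3 = 1 := ha3e.symm
          have hn4 : 4 ≤ n := by by_contra h; exact h3 ⟨by omega, ha1', ha3'⟩
          have ha4 : 1 ≤ a 4 := hpos 4 (by omega) hn4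
          have h4a : (1:ℝ) ≤ (a 4 : ℝ) := by exact_mod_cast ha4
          have hI : TVInv a 4 := by
            constructor
            · rw [eV4, eT4, eT3, eT2, ha1', ha3']; push_cast
              nlinarith [mul_nonneg (sub_nonneg.2 h2a) (sub_nonneg.2 h4a)]
            · show _ ≤ (Trec a 4 : ℝ) + (Trec a 3 : ℝ)
              rw [eV4, eT4, eT3, eT2, ha1', ha3']; push_cast
              nlinarith [mul_nonneg (sub_nonneg.2 h2a) (sub_nonneg.2 h4a)]
          exact (TVprop a 4 (by norm_num) hI n hn4 fun i hi h' => hpos i (by omega) h').1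
    · -- a 2 = 1
      have ha2' : a 2 = 1 := ha2e.symm
      have hn3 : 3 ≤ n := by by_contra h; exact h2 ⟨by omega, ha1', ha2'⟩
      have ha3 : 1 ≤ a 3 := hpos 3 (by omega) hn3
      rcases eq_or_lt_of_le ha3 with ha3e | ha3g
      swap
      · -- a 3 ≥ 2
        have h3a : (2:ℝ) ≤ (a 3 : ℝ) := by exact_mod_cast ha3g
        have hI : TVInv a 3 := by
          constructor
          · rw [eV3, eT3, ha1', ha2']; push_cast; nlinarith
          · show _ ≤ (Trec a 3 : ℝ) + (Trec a 2 : ℝ)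
            rw [eV3, eT3, eT2, ha1', ha2']; push_cast; nlinarith
        exact (TVprop a 3 (by norm_num) hI n hn3 fun i hi h' => hpos i (by omega) h').1
      · -- a 3 = 1
        have ha3' : a 3 = 1 := ha3e.symm
        have hn4 : 4 ≤ n := by by_contra h; exact h3 ⟨by omega, ha1', ha3'⟩
        have ha4 : 1 ≤ a 4 := hpos 4 (by omega) hn4
        rcases eq_or_lt_of_le ha4 with ha4e | ha4g
        swap
        · -- a 4 ≥ 2
          have h4a : (2:ℝ) ≤ (a 4 : ℝ) := by exact_mod_cast ha4g
          have hI : TVInv a 4 := by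
            constructor
            · rw [eV4, eT4, eT3, eT2, ha1', ha2', ha3']; push_cast; nlinarith
            · show _ ≤ (Trec a 4 : ℝ) + (Trec a 3 : ℝ)
              rw [eV4, eT4, eT3, eT2, ha1', ha2', ha3']; push_cast; nlinarith
          exact (TVprop a 4 (by norm_num) hI n hn4 fun i hi h' => hpos i (by omega) h').1
        · -- a 4 = 1
          have ha4' : a 4 = 1 := ha4e.symm
          have hn5 : 5 ≤ n := by by_contra h; exact h4 ⟨by omega, ha1', ha2', ha3', ha4'⟩
          have ha5 : 1 ≤ a 5 := hpos 5 (by omega) hn5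
          have h5a : (1:ℝ) ≤ (a 5 : ℝ) := by exact_mod_cast ha5
          have hI : TVInv a 5 := by
            constructor
            · rw [eV5, eT5, eT4, eT3, eT2, ha1', ha2', ha3', ha4']; push_cast; nlinarith
            · show _ ≤ (Trec a 5 : ℝ) + (Trec a 4 : ℝ)
              rw [eV5, eT5, eT4, eT3, eT2, ha1', ha2', ha3', ha4']; push_cast; nlinarith
          exact (TVprop a 5 (by norm_num) hI n hn5 fun i hi h' => hpos i (by omega) h').1
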